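/- arXiv:2002.10770 — 3 statements merged into one kernel-verified Lean document; each statement's English description precedes it below -/
import Mathlib

section
/- Let W ≥ 1 and 1 ≤ w ≤ W be integers, and let a crop of size w start at a uniformly random position s ∈ {0,...,W-w}. For a pixel x with Δx = min(x, W-1-x) and Δw = W - w, if w ≤ Δx, then the probability that x is contained in the crop equals w / (Δw + 1). -/
def numCovering (W w x : ℕ) : ℕ :=
  ((Finset.range (W - w + 1)).filter (fun s => s ≤ x ∧ x < s + w)).card

def coverProb (W w x : ℕ) : ℚ := (numCovering W w x : ℚ) / ((W - w + 1 : ℕ) : ℚ)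

theorem stmt_1 (W w x : ℕ) (hw1 : 1 ≤ w) (hwW : w ≤ W) (hx : x ≤ W - 1)
    (h : w ≤ min x (W - 1 - x)) :
    coverProb W w x = (w : ℚ) / ((W - w + 1 : ℕ) : ℚ) := by
  have h1 : w ≤ x := le_trans h (min_le_left _ _)
  have h2 : w ≤ W - 1 - x := le_trans h (min_le_right _ _)
  have key : ((Finset.range (W - w + 1)).filter (fun s => s ≤ x ∧ x < s + w))
      = Finset.Ico (x - w + 1) (x + 1) := by
    ext s
    simp only [Finset.mem_filter, Finset.mem_range, Finset.mem_Ico]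
    omega
  have hn : numCovering W w x = w := by
    rw [numCovering, key, Nat.card_Ico]; omega
  rw [coverProb, hn]
end

section
/- Consider a 2D image of size H × W and a crop of size h × w with H/2 < h ≤ H and W/2 < w ≤ W, placed uniformly at random among valid positions. If pixel (x,y) satisfies Δx = min(x, W-1-x) > W - w and Δy = min(y, H-1-y) > H - h, then (x,y) is covered with probability 1. If instead Δx ≤ W - w and Δy ≤ H - h (a 'marginal' pixel), then the covering probability equals (Δx+1)(Δy+1) / ((W-w+1)(H-h+1)). -/
def numCovering2 (H W h w y x : ℕ) : ℕ :=
  ((Finset.range (H - h + 1) ×ˢ Finset.range (W - w + 1)).filter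
    (fun p => p.1 ≤ y ∧ y < p.1 + h ∧ p.2 ≤ x ∧ x < p.2 + w)).card

def coverProb2 (H W h w y x : ℕ) : ℚ :=
  (numCovering2 H W h w y x : ℚ) / (((H - h + 1) * (W - w + 1) : ℕ) : ℚ)

lemma count1 (D h y : ℕ) :
    ((Finset.range (D+1)).filter (fun s => s ≤ y ∧ y < s + h)).card
      = min y D + 1 - (y + 1 - h) := by
  have hset : (Finset.range (D+1)).filter (fun s => s ≤ y ∧ y < s + h)
      = Finset.Icc (y + 1 - h) (min y D) := by
    ext s
    simp only [Finset.mem_filter, Finset.mem_range, Finset.mem_Icc, Nat.lt_succ_iff]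
    omega
  rw [hset, Nat.card_Icc]

lemma numCovering2_eq (H W h w y x : ℕ) :
    numCovering2 H W h w y x
      = (min y (H - h) + 1 - (y + 1 - h)) * (min x (W - w) + 1 - (x + 1 - w)) := by
  have hset : ((Finset.range (H - h + 1) ×ˢ Finset.range (W - w + 1)).filter
      (fun p => p.1 ≤ y ∧ y < p.1 + h ∧ p.2 ≤ x ∧ x < p.2 + w))
      = ((Finset.range (H - h + 1)).filter (fun s => s ≤ y ∧ y < s + h)) ×ˢ
        ((Finset.range (W - w + 1)).filter (fun s => s ≤ x ∧ x < s + w)) := by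
    ext p
    simp only [Finset.mem_filter, Finset.mem_product]
    tauto
  rw [numCovering2, hset, Finset.card_product, count1, count1]

theorem stmt_8 (H W h w y x : ℕ)
    (hh2 : H < 2 * h) (hhH : h ≤ H) (hw2 : W < 2 * w) (hwW : w ≤ W)
    (hx : x ≤ W - 1) (hy : y ≤ H - 1) :
    (W - w < min x (W - 1 - x) → H - h < min y (H - 1 - y) →
      coverProb2 H W h w y x = 1) ∧
    (min x (W - 1 - x) ≤ W - w → min y (H - 1 - y) ≤ H - h →
      coverProb2 H W h w y x =
        (((min x (W - 1 - x) + 1) * (min y (H - 1 - y) + 1) : ℕ) : ℚ) /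
          (((W - w + 1) * (H - h + 1) : ℕ) : ℚ)) := by
  have hden : (((H - h + 1) * (W - w + 1) : ℕ) : ℚ) ≠ 0 := by
    positivity
  constructor
  · intro h1 h2
    have hA : min y (H - h) + 1 - (y + 1 - h) = H - h + 1 := by omega
    have hB : min x (W - w) + 1 - (x + 1 - w) = W - w + 1 := by omega
    have hnum : numCovering2 H W h w y x = (H - h + 1) * (W - w + 1) := by
      rw [numCovering2_eq, hA, hB]
    rw [coverProb2, hnum, div_self hden]
  · intro h1 h2
    have hA : min y (H - h) + 1 - (y + 1 - h) = min y (H - 1 - y) + 1 := by omega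
    have hB : min x (W - w) + 1 - (x + 1 - w) = min x (W - 1 - x) + 1 := by omega
    have hnum : numCovering2 H W h w y x
        = (min y (H - 1 - y) + 1) * (min x (W - 1 - x) + 1) := by
      rw [numCovering2_eq, hA, hB]
    rw [coverProb2, hnum]
    rw [div_eq_div_iff hden (by positivity)]
    push_cast
    ring
end

section
/- Consider two pixels in a 2D image: a 'fast' pixel at border distances (d_f, e_f) and a 'slow' pixel at (d_s, e_s), with d_f ≤ d_s, e_f ≤ e_s, and both marginal for crop size (h, w) (i.e., d_s ≤ W-w, e_s ≤ H-h, with 2w > W, 2h > H). Then the ratio of their covering probabilities ((d_f+1)(e_f+1))/((d_s+1)(e_s+1)) is independent of the crop size; but if the slow pixel is central (covered with probability 1) and the fast pixel is marginal, then the ratio of fast-to-slow covering probability is (d_f+1)(e_f+1)/((W-w+1)(H-h+1)), which is strictly increasing as w and h increase. -/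
theorem stmt_14 (H W w₁ w₂ h₁ h₂ df ef ds es : ℕ)
    (hdf : df ≤ ds) (hef : ef ≤ es) :
    (∀ w h, W < 2 * w → w ≤ W → H < 2 * h → h ≤ H → ds ≤ W - w → es ≤ H - h →
      ((((df + 1) * (ef + 1) : ℕ) : ℚ) / (((W - w + 1) * (H - h + 1) : ℕ) : ℚ)) /
        ((((ds + 1) * (es + 1) : ℕ) : ℚ) / (((W - w + 1) * (H - h + 1) : ℕ) : ℚ)) =
      (((df + 1) * (ef + 1) : ℕ) : ℚ) / (((ds + 1) * (es + 1) : ℕ) : ℚ)) ∧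
    (W < 2 * w₁ → H < 2 * h₁ → w₁ < w₂ → h₁ < h₂ → w₂ ≤ W → h₂ ≤ H →
      df ≤ W - w₁ → ef ≤ H - h₁ →
      (((df + 1) * (ef + 1) : ℕ) : ℚ) / (((W - w₁ + 1) * (H - h₁ + 1) : ℕ) : ℚ) <
      (((df + 1) * (ef + 1) : ℕ) : ℚ) / (((W - w₂ + 1) * (H - h₂ + 1) : ℕ) : ℚ)) := by
  constructor
  · intro w h _ _ _ _ _ _
    have hc : (((W - w + 1) * (H - h + 1) : ℕ) : ℚ) ≠ 0 := by positivity
    have hb : (((ds + 1) * (es + 1) : ℕ) : ℚ) ≠ 0 := by positivity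
    rw [div_div_div_cancel_right₀ hc]
  · intro _ _ hw hh hw2 hh2 _ _
    have h1 : W - w₂ < W - w₁ := Nat.sub_lt_sub_left (lt_of_lt_of_le hw hw2) hw
    have h2 : H - h₂ < H - h₁ := Nat.sub_lt_sub_left (lt_of_lt_of_le hh hh2) hh
    have hlt : ((W - w₂ + 1) * (H - h₂ + 1) : ℕ) < ((W - w₁ + 1) * (H - h₁ + 1) : ℕ) :=
      Nat.mul_lt_mul_of_lt_of_lt (by omega) (by omega)
    have hlt' : (((W - w₂ + 1) * (H - h₂ + 1) : ℕ) : ℚ) < (((W - w₁ + 1) * (H - h₁ + 1) : ℕ) : ℚ) := by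
      exact_mod_cast hlt
    apply div_lt_div_of_pos_left
    · positivity
    · positivity
    · exact hlt'
end
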